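/- Let N be a positive integer and let p : ℕ → ℚ[q, q⁻¹] be a sequence of nonzero Laurent polynomials over ℚ such that p(n+1) = q⁴·p(n-1) + (q³ - q)·p(n) for all n ≥ 1. If deg p(N) ≥ deg p(N-1) + 2, then for every n ≥ N we have deg p(n+1) = deg p(n) + 3. -/

import Mathlib

/-!
If `deg b ≥ deg a + 2`, then in `T⁴ a + (T³ - T) b` the term `T³ b` strictly dominates both
`T⁴ a` and `T b`, so the degree jumps by exactly `3`. A jump of `3` is again a gap of at least
`2`, so the same argument applies at the next index, and so on.
-/

open LaurentPolynomial

/-- The degree of a Laurent polynomial: the largest exponent of the variable occurring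
with nonzero coefficient (junk value `0` for the zero polynomial). -/
noncomputable def ldeg (f : LaurentPolynomial ℚ) : ℤ :=
  (LaurentPolynomial.degree f).unbotD 0

namespace LaurentPolynomial

variable {R : Type*}

section Semiring

variable [Semiring R]

theorem degree_eq_supDegree (f : R[T;T⁻¹]) : f.degree = f.supDegree WithBot.some :=
  Finset.max_eq_sup_withBot _

theorem degree_add_eq_right_of_degree_lt {f g : R[T;T⁻¹]} (h : f.degree < g.degree) :
    (f + g).degree = g.degree := by
  simp only [degree_eq_supDegree] at *
  exact AddMonoidAlgebra.supDegree_add_eq_right h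

theorem degree_T_mul (k : ℤ) (f : R[T;T⁻¹]) : (T k * f).degree = k + f.degree := by
  rw [degree, degree, T, AddMonoidAlgebra.support_coeff_single_mul f 1 (by simp) k,
    Finset.max_eq_sup_withBot, Finset.max_eq_sup_withBot, Finset.sup_map,
    Finset.apply_sup_eq_sup_comp_of_linearOrder (fun x : WithBot ℤ => k + x)
      (fun _ _ h => add_le_add_right h _) (WithBot.add_bot _)]
  rfl

end Semiring

section Ring

variable [Ring R]

@[simp]
theorem degree_neg (f : R[T;T⁻¹]) : (-f).degree = f.degree := by
  simp [degree_eq_supDegree]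

theorem degree_sub_eq_left_of_degree_lt {f g : R[T;T⁻¹]} (h : g.degree < f.degree) :
    (f - g).degree = f.degree := by
  rw [sub_eq_add_neg, add_comm, degree_add_eq_right_of_degree_lt (by rwa [degree_neg])]

/-- The Jones skein relation `p(n+1) = q⁴ p(n-1) + (q³ - q) p(n)`, written in `T = q = t^(1/2)`. -/
noncomputable def skeinStep (a b : R[T;T⁻¹]) : R[T;T⁻¹] :=
  T 4 * a + (T 3 - T 1) * b

theorem degree_skeinStep {a b : R[T;T⁻¹]} (hb : b ≠ 0) (hab : a.degree + 2 ≤ b.degree) :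
    (skeinStep a b).degree = b.degree + 3 := by
  obtain ⟨d, hd⟩ := WithBot.ne_bot_iff_exists.mp (mt degree_eq_bot_iff.mp hb)
  rw [← hd] at hab ⊢
  have hlead : ((T 3 - T 1) * b).degree = ↑(d + 3) := by
    rw [sub_mul, degree_sub_eq_left_of_degree_lt] <;> simp only [degree_T_mul, ← hd] <;>
      norm_cast <;> omega
  have hlow : (T 4 * a).degree < ↑(d + 3) := by
    rw [degree_T_mul]
    cases ha : a.degree with
    | bot => exact WithBot.bot_lt_coe _
    | coe e =>
      rw [ha] at hab
      simp only [← WithBot.coe_ofNat, ← WithBot.coe_add, WithBot.coe_le_coe,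
        WithBot.coe_lt_coe] at hab ⊢
      omega
  rw [skeinStep, degree_add_eq_right_of_degree_lt (hlead ▸ hlow), hlead]
  rfl

theorem degree_succ_succ_eq_of_skeinStep {p : ℕ → R[T;T⁻¹]} (hp : ∀ n, p n ≠ 0)
    (hrec : ∀ n, p (n + 2) = skeinStep (p n) (p (n + 1))) {M : ℕ}
    (hgap : (p M).degree + 2 ≤ (p (M + 1)).degree) {n : ℕ} (hn : M ≤ n) :
    (p (n + 2)).degree = (p (n + 1)).degree + 3 := by
  have gap : ∀ n, M ≤ n → (p n).degree + 2 ≤ (p (n + 1)).degree := by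
    intro n hn
    induction n, hn using Nat.le_induction with
    | base => exact hgap
    | succ n _ ih =>
      rw [hrec, degree_skeinStep (hp _) ih]
      gcongr
      exact WithBot.coe_le_coe.mpr (by norm_num)
  rw [hrec, degree_skeinStep (hp _) (gap n hn)]

end Ring

end LaurentPolynomial

theorem degree_eq_ldeg {f : LaurentPolynomial ℚ} (hf : f ≠ 0) : f.degree = ldeg f := by
  obtain ⟨d, hd⟩ := WithBot.ne_bot_iff_exists.mp (mt degree_eq_bot_iff.mp hf)
  rw [ldeg, ← hd, WithBot.unbotD_coe]

theorem stmt6_general (N : ℕ)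
    (p : ℕ → LaurentPolynomial ℚ) (hp : ∀ n, p n ≠ 0)
    (hrec : ∀ n : ℕ, 1 ≤ n → p (n + 1) = T 4 * p (n - 1) + (T 3 - T 1) * p n)
    (hgap : ldeg (p (N - 1)) + 2 ≤ ldeg (p N)) :
    ∀ n, N ≤ n → ldeg (p (n + 1)) = ldeg (p n) + 3 := by
  obtain ⟨M, rfl⟩ : ∃ M, N = M + 1 :=
    Nat.exists_eq_succ_of_ne_zero (by rintro rfl; simp at hgap)
  have hrec' (n : ℕ) : p (n + 2) = skeinStep (p n) (p (n + 1)) := hrec (n + 1) (by omega)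
  have hgap' : (p M).degree + 2 ≤ (p (M + 1)).degree := by
    rw [degree_eq_ldeg (hp _), degree_eq_ldeg (hp _)]
    simpa [← WithBot.coe_ofNat, ← WithBot.coe_add] using hgap
  intro n hn
  obtain ⟨k, rfl⟩ : ∃ k, n = k + 1 := ⟨n - 1, by omega⟩
  have h := degree_succ_succ_eq_of_skeinStep hp hrec' hgap' (Nat.le_of_succ_le_succ hn)
  rw [degree_eq_ldeg (hp _), degree_eq_ldeg (hp _), ← WithBot.coe_ofNat, ← WithBot.coe_add,
    WithBot.coe_inj] at h
  exact h

theorem stmt6 (N : ℕ) (hN : 0 < N)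
    (p : ℕ → LaurentPolynomial ℚ) (hp : ∀ n, p n ≠ 0)
    (hrec : ∀ n : ℕ, 1 ≤ n → p (n + 1) = T 4 * p (n - 1) + (T 3 - T 1) * p n)
    (hgap : ldeg (p (N - 1)) + 2 ≤ ldeg (p N)) :
    ∀ n, N ≤ n → ldeg (p (n + 1)) = ldeg (p n) + 3 :=
  stmt6_general N p hp hrec hgap
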